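/- arXiv:2105.02537 — 2 statements merged into one kernel-verified Lean document; each statement's English description precedes it below -/
import Mathlib

section
/- The additive semigroup (S,+) of any weak brace S is a Clifford semigroup; in particular a - a = -a + a for every a ∈ S. -/
/-- A weak (left) brace: `(S,+)` and `(S,∘)` are inverse semigroups (with designated
inverse maps `neg` and `inv`), satisfying `a∘(b+c) = a∘b - a + a∘c` and `a∘a⁻ = -a + a`. -/
structure WeakBrace (S : Type*) where
  add : S → S → S
  mul : S → S → S
  neg : S → S
  inv : S → S
  add_assoc : ∀ a b c : S, add (add a b) c = add a (add b c)
  mul_assoc : ∀ a b c : S, mul (mul a b) c = mul a (mul b c)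
  add_neg_add : ∀ a : S, add (add a (neg a)) a = a
  neg_add_neg : ∀ a : S, add (add (neg a) a) (neg a) = neg a
  neg_unique : ∀ a x : S, add (add a x) a = a → add (add x a) x = x → x = neg a
  mul_inv_mul : ∀ a : S, mul (mul a (inv a)) a = a
  inv_mul_inv : ∀ a : S, mul (mul (inv a) a) (inv a) = inv a
  inv_unique : ∀ a x : S, mul (mul a x) a = a → mul (mul x a) x = x → x = inv a
  distrib : ∀ a b c : S, mul a (add b c) = add (add (mul a b) (neg a)) (mul a c)
  mul_inv_eq : ∀ a : S, mul a (inv a) = add (neg a) a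

/-!
The additive part of a weak brace is an inverse semigroup, so its idempotents commute.
Distributivity gives `a ∘ (-b) = a - a ∘ b + a`; expanding `a = a ∘ (a⁻ ∘ a) = a ∘ (-a⁻ + a⁻)`
with it yields `a = a + a - a + (-a + a)`, hence `a + (a - a) = a`. In an inverse semigroup this
identity forces `a - a = -a + a` for every `a`, and that in turn makes every idempotent central.
-/

structure IsInverseSemigroup {S : Type*} (op : S → S → S) (inv : S → S) : Prop where
  assoc : ∀ a b c, op (op a b) c = op a (op b c)
  op_inv_op : ∀ a, op (op a (inv a)) a = a
  inv_op_inv : ∀ a, op (op (inv a) a) (inv a) = inv a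
  eq_inv_of_op_op : ∀ a x, op (op a x) a = a → op (op x a) x = x → x = inv a

namespace IsInverseSemigroup

variable {S : Type*} {op : S → S → S} {inv : S → S}

local infixl:70 " ⋆ " => op

theorem inv_inv (h : IsInverseSemigroup op inv) (a : S) : inv (inv a) = a :=
  (h.eq_inv_of_op_op (inv a) a (h.inv_op_inv a) (h.op_inv_op a)).symm

theorem op_inv_idem (h : IsInverseSemigroup op inv) (a : S) :
    a ⋆ inv a ⋆ (a ⋆ inv a) = a ⋆ inv a := by
  rw [← h.assoc, h.op_inv_op]

theorem inv_op_idem (h : IsInverseSemigroup op inv) (a : S) :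
    inv a ⋆ a ⋆ (inv a ⋆ a) = inv a ⋆ a := by
  rw [← h.assoc, h.inv_op_inv]

theorem op_op_of_idem (h : IsInverseSemigroup op inv) {e : S} (he : e ⋆ e = e) (x : S) :
    e ⋆ (e ⋆ x) = e ⋆ x := by
  rw [← h.assoc, he]

theorem inv_eq_self_of_idem (h : IsInverseSemigroup op inv) {e : S} (he : e ⋆ e = e) :
    inv e = e :=
  (h.eq_inv_of_op_op e e (by rw [he, he]) (by rw [he, he])).symm

theorem op_idem_of_idem (h : IsInverseSemigroup op inv) {e f : S} (he : e ⋆ e = e)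
    (hf : f ⋆ f = f) : e ⋆ f ⋆ (e ⋆ f) = e ⋆ f := by
  set x := inv (e ⋆ f) with hx_def
  have hx_inv : x ⋆ e ⋆ f ⋆ x = x := by
    rw [h.assoc x e f, h.inv_op_inv]
  -- `f ⋆ x ⋆ e` is also an inverse of `e ⋆ f`, hence equal to `x`.
  have hx : f ⋆ x ⋆ e = x := by
    refine h.eq_inv_of_op_op (e ⋆ f) _ ?_ ?_
    · have := h.op_inv_op (e ⋆ f)
      simpa only [h.assoc, h.op_op_of_idem he, h.op_op_of_idem hf] using this
    · calc f ⋆ x ⋆ e ⋆ (e ⋆ f) ⋆ (f ⋆ x ⋆ e) = f ⋆ (x ⋆ e ⋆ f ⋆ x) ⋆ e := by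
            simp only [h.assoc, h.op_op_of_idem he, h.op_op_of_idem hf]
        _ = f ⋆ x ⋆ e := by rw [hx_inv]
  have hxx : x ⋆ x = x := by
    calc x ⋆ x = f ⋆ (x ⋆ e ⋆ f ⋆ x) ⋆ e := by
          conv_lhs => rw [← hx]
          simp only [h.assoc]
      _ = x := by rw [hx_inv, hx]
  have hef : e ⋆ f = x := by
    rw [← h.inv_inv (e ⋆ f), ← hx_def, h.inv_eq_self_of_idem hxx]
  rw [hef, hxx]

theorem comm_of_idem (h : IsInverseSemigroup op inv) {e f : S} (he : e ⋆ e = e)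
    (hf : f ⋆ f = f) : e ⋆ f = f ⋆ e := by
  have hef := h.op_idem_of_idem he hf
  have hfe := h.op_idem_of_idem hf he
  have h_inv : f ⋆ e = inv (e ⋆ f) := by
    refine h.eq_inv_of_op_op (e ⋆ f) (f ⋆ e) ?_ ?_
    · simpa only [h.assoc, h.op_op_of_idem he, h.op_op_of_idem hf] using hef
    · simpa only [h.assoc, h.op_op_of_idem he, h.op_op_of_idem hf] using hfe
  rw [h_inv, h.inv_eq_self_of_idem hef]

theorem inv_op (h : IsInverseSemigroup op inv) (a b : S) : inv (a ⋆ b) = inv b ⋆ inv a := by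
  have hcomm := h.comm_of_idem (h.op_inv_idem b) (h.inv_op_idem a)
  refine (h.eq_inv_of_op_op (a ⋆ b) (inv b ⋆ inv a) ?_ ?_).symm
  · calc a ⋆ b ⋆ (inv b ⋆ inv a) ⋆ (a ⋆ b) = a ⋆ (b ⋆ inv b ⋆ (inv a ⋆ a)) ⋆ b := by
          simp only [h.assoc]
      _ = a ⋆ inv a ⋆ a ⋆ (b ⋆ inv b ⋆ b) := by
          rw [hcomm]
          simp only [h.assoc]
      _ = a ⋆ b := by rw [h.op_inv_op, h.op_inv_op]
  · calc inv b ⋆ inv a ⋆ (a ⋆ b) ⋆ (inv b ⋆ inv a)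
          = inv b ⋆ (inv a ⋆ a ⋆ (b ⋆ inv b)) ⋆ inv a := by simp only [h.assoc]
      _ = inv b ⋆ b ⋆ inv b ⋆ (inv a ⋆ a ⋆ inv a) := by
          rw [← hcomm]
          simp only [h.assoc]
      _ = inv b ⋆ inv a := by rw [h.inv_op_inv, h.inv_op_inv]

theorem op_inv_comm_of_op_op_inv (h : IsInverseSemigroup op inv)
    (hself : ∀ a, a ⋆ (a ⋆ inv a) = a) (a : S) : a ⋆ inv a = inv a ⋆ a := by
  have hneg : inv a ⋆ (inv a ⋆ a) = inv a := by
    simpa only [h.inv_inv] using hself (inv a)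
  have hE : a ⋆ inv a = a ⋆ inv a ⋆ (inv a ⋆ a) := by rw [h.assoc, hneg]
  have hF : inv a ⋆ a = inv a ⋆ a ⋆ (a ⋆ inv a) := by rw [h.assoc, hself]
  rw [hE, h.comm_of_idem (h.op_inv_idem a) (h.inv_op_idem a), ← hF]

theorem idem_comm_of_op_inv_comm (h : IsInverseSemigroup op inv)
    (hcomm : ∀ a, a ⋆ inv a = inv a ⋆ a) {e : S} (he : e ⋆ e = e) (a : S) :
    e ⋆ a = a ⋆ e := by
  have hE := h.comm_of_idem he (h.op_inv_idem a)
  have hea := hcomm (e ⋆ a)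
  rw [h.inv_op, h.inv_eq_self_of_idem he] at hea
  have key : e ⋆ (a ⋆ inv a) = inv a ⋆ (e ⋆ a) := by
    calc e ⋆ (a ⋆ inv a) = e ⋆ e ⋆ (a ⋆ inv a) := by rw [he]
      _ = e ⋆ a ⋆ (inv a ⋆ e) := by rw [h.assoc, hE]; simp only [h.assoc]
      _ = inv a ⋆ e ⋆ (e ⋆ a) := hea
      _ = inv a ⋆ (e ⋆ a) := by rw [h.assoc, h.op_op_of_idem he]
  calc e ⋆ a = e ⋆ (a ⋆ inv a ⋆ a) := by rw [h.op_inv_op]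
    _ = a ⋆ (inv a ⋆ (e ⋆ a)) := by rw [← h.assoc, hE]; simp only [h.assoc]
    _ = a ⋆ (a ⋆ inv a) ⋆ e := by rw [← key, hE]; simp only [h.assoc]
    _ = a ⋆ e := by rw [hcomm a, ← h.assoc a, h.op_inv_op]

end IsInverseSemigroup

namespace WeakBrace

variable {S : Type*} (W : WeakBrace S)

local infixl:65 " +ₛ " => W.add
local infixl:70 " ∘ₛ " => W.mul
local prefix:max "-ₛ" => W.neg

theorem isInverseSemigroup_add : IsInverseSemigroup W.add W.neg :=
  ⟨W.add_assoc, W.add_neg_add, W.neg_add_neg, W.neg_unique⟩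

theorem isInverseSemigroup_mul : IsInverseSemigroup W.mul W.inv :=
  ⟨W.mul_assoc, W.mul_inv_mul, W.inv_mul_inv, W.inv_unique⟩

theorem neg_mul (a b : S) : -ₛ(a ∘ₛ b) = -ₛa +ₛ a ∘ₛ -ₛb +ₛ -ₛa := by
  -- Expand `a ∘ (b - b + b)` and `a ∘ (-b + b - b)` by distributivity.
  refine (W.neg_unique (a ∘ₛ b) _ ?_ ?_).symm
  · have h := W.distrib a (b +ₛ -ₛb) b
    rw [W.add_neg_add, W.distrib] at h
    simpa only [W.add_assoc] using h.symm
  · have h := W.distrib a (-ₛb +ₛ b) (-ₛb)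
    rw [W.neg_add_neg, W.distrib] at h
    calc -ₛa +ₛ a ∘ₛ -ₛb +ₛ -ₛa +ₛ a ∘ₛ b +ₛ (-ₛa +ₛ a ∘ₛ -ₛb +ₛ -ₛa)
        = -ₛa +ₛ (a ∘ₛ -ₛb +ₛ -ₛa +ₛ a ∘ₛ b +ₛ -ₛa +ₛ a ∘ₛ -ₛb) +ₛ -ₛa := by
          simp only [W.add_assoc]
      _ = -ₛa +ₛ a ∘ₛ -ₛb +ₛ -ₛa := by rw [← h]

theorem mul_neg (a b : S) : a ∘ₛ -ₛb = a +ₛ -ₛ(a ∘ₛ b) +ₛ a := by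
  have H := W.isInverseSemigroup_add
  have h := W.neg_mul a (-ₛb)
  rw [H.inv_inv] at h
  rw [← H.inv_inv (a ∘ₛ -ₛb), h, H.inv_op, H.inv_op, H.inv_inv, H.assoc]

theorem mul_neg_inv (a : S) : a ∘ₛ -ₛ(W.inv a) = a +ₛ a := by
  have H := W.isInverseSemigroup_add
  rw [W.mul_neg, W.mul_inv_eq, H.inv_eq_self_of_idem (H.inv_op_idem a), ← H.assoc a,
    H.op_inv_op]

theorem add_add_neg_eq_self (a : S) : a +ₛ (a +ₛ -ₛa) = a := by
  have H := W.isInverseSemigroup_add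
  have hinv : W.inv a ∘ₛ a = -ₛ(W.inv a) +ₛ W.inv a := by
    simpa only [W.isInverseSemigroup_mul.inv_inv] using W.mul_inv_eq (W.inv a)
  have h := W.distrib a (-ₛ(W.inv a)) (W.inv a)
  rw [← hinv, ← W.mul_assoc, W.mul_inv_mul, W.mul_neg_inv, W.mul_inv_eq] at h
  calc a +ₛ (a +ₛ -ₛa) = a +ₛ (-ₛa +ₛ a) +ₛ (a +ₛ -ₛa) := by
        rw [← H.assoc a (-ₛa) a, H.op_inv_op]
    _ = a +ₛ (a +ₛ -ₛa) +ₛ (-ₛa +ₛ a) := by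
        rw [H.assoc, H.comm_of_idem (H.inv_op_idem a) (H.op_inv_idem a), ← H.assoc]
    _ = a := by rw [← H.assoc a a]; exact h.symm

end WeakBrace

theorem weakBrace_add_clifford {S : Type*} (W : WeakBrace S) :
    (∀ e a : S, W.add e e = e → W.add e a = W.add a e) ∧
    (∀ a : S, W.add a (W.neg a) = W.add (W.neg a) a) := by
  have H := W.isInverseSemigroup_add
  have hcomm := H.op_inv_comm_of_op_op_inv W.add_add_neg_eq_self
  exact ⟨fun e a he => H.idem_comm_of_op_inv_comm hcomm he a, hcomm⟩
end

section
/- In a weak brace S, for all a, b ∈ S: (ρ_b(a))⁻ = b⁻∘a⁻ - b⁻, where ρ_b(a) := (a⁻ + b)⁻ ∘ b. -/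
class InverseSemigroup (S : Type*) extends Semigroup S, Inv S where
  mul_inv_mul_self (a : S) : a * a⁻¹ * a = a
  inv_mul_inv_self (a : S) : a⁻¹ * a * a⁻¹ = a⁻¹
  eq_inv_of_mul_mul (a x : S) : a * x * a = a → x * a * x = x → x = a⁻¹

namespace InverseSemigroup

variable {S : Type*} [InverseSemigroup S]

theorem inv_inv (a : S) : a⁻¹⁻¹ = a :=
  (eq_inv_of_mul_mul a⁻¹ a (inv_mul_inv_self a) (mul_inv_mul_self a)).symm

theorem inv_eq_self_of_isIdempotentElem {e : S} (he : IsIdempotentElem e) : e⁻¹ = e :=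
  (eq_inv_of_mul_mul e e (by rw [he.eq, he.eq]) (by rw [he.eq, he.eq])).symm

theorem isIdempotentElem_mul_inv (a : S) : IsIdempotentElem (a * a⁻¹) := by
  rw [IsIdempotentElem, ← mul_assoc, mul_inv_mul_self]

theorem isIdempotentElem_inv_mul (a : S) : IsIdempotentElem (a⁻¹ * a) := by
  rw [IsIdempotentElem, ← mul_assoc, inv_mul_inv_self]

/-- `f * (e * f)⁻¹ * e` is also an inverse of `e * f`, which forces `(e * f)⁻¹` to be idempotent. -/
theorem isIdempotentElem_mul {e f : S} (he : IsIdempotentElem e) (hf : IsIdempotentElem f) :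
    IsIdempotentElem (e * f) := by
  have h₁ := mul_inv_mul_self (e * f)
  have h₂ := inv_mul_inv_self (e * f)
  have hef := inv_inv (e * f)
  set x := (e * f)⁻¹
  have hx : f * x * e = x := eq_inv_of_mul_mul (e * f) (f * x * e)
    (calc e * f * (f * x * e) * (e * f) = e * (f * f) * x * (e * e) * f := by simp only [mul_assoc]
      _ = e * f * x * (e * f) := by rw [he.eq, hf.eq]; simp only [mul_assoc]
      _ = e * f := h₁)
    (calc f * x * e * (e * f) * (f * x * e)
          = f * (x * (e * e * (f * f)) * x) * e := by simp only [mul_assoc]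
      _ = f * x * e := by rw [he.eq, hf.eq, h₂])
  have hx_idem : IsIdempotentElem x := calc
    x * x = f * x * e * (f * x * e) := by rw [hx]
    _ = f * (x * (e * f) * x) * e := by simp only [mul_assoc]
    _ = x := by rw [h₂, hx]
  rwa [← hef, inv_eq_self_of_isIdempotentElem hx_idem]

theorem commute_of_isIdempotentElem {e f : S} (he : IsIdempotentElem e)
    (hf : IsIdempotentElem f) : Commute e f := by
  have hfe : f * e = (e * f)⁻¹ := eq_inv_of_mul_mul (e * f) (f * e)
    (calc e * f * (f * e) * (e * f) = e * (f * f) * (e * e) * f := by simp only [mul_assoc]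
      _ = e * f * (e * f) := by rw [he.eq, hf.eq, mul_assoc]
      _ = e * f := (isIdempotentElem_mul he hf).eq)
    (calc f * e * (e * f) * (f * e) = f * (e * e) * (f * f) * e := by simp only [mul_assoc]
      _ = f * e * (f * e) := by rw [he.eq, hf.eq, mul_assoc]
      _ = f * e := (isIdempotentElem_mul hf he).eq)
  rw [Commute, SemiconjBy, hfe, inv_eq_self_of_isIdempotentElem (isIdempotentElem_mul he hf)]

theorem mul_inv_rev (a b : S) : (a * b)⁻¹ = b⁻¹ * a⁻¹ := by
  have hc : Commute (b * b⁻¹) (a⁻¹ * a) :=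
    commute_of_isIdempotentElem (isIdempotentElem_mul_inv b) (isIdempotentElem_inv_mul a)
  refine (eq_inv_of_mul_mul (a * b) (b⁻¹ * a⁻¹) ?_ ?_).symm
  · calc a * b * (b⁻¹ * a⁻¹) * (a * b) = a * (b * b⁻¹ * (a⁻¹ * a)) * b := by simp only [mul_assoc]
      _ = a * a⁻¹ * a * (b * b⁻¹ * b) := by rw [hc.eq]; simp only [mul_assoc]
      _ = a * b := by rw [mul_inv_mul_self, mul_inv_mul_self]
  · calc b⁻¹ * a⁻¹ * (a * b) * (b⁻¹ * a⁻¹) = b⁻¹ * (a⁻¹ * a * (b * b⁻¹)) * a⁻¹ := by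
          simp only [mul_assoc]
      _ = b⁻¹ * b * b⁻¹ * (a⁻¹ * a * a⁻¹) := by rw [← hc.eq]; simp only [mul_assoc]
      _ = b⁻¹ * a⁻¹ := by rw [inv_mul_inv_self, inv_mul_inv_self]

end InverseSemigroup

namespace WeakBrace

variable {S : Type*} (W : WeakBrace S)

local infixl:65 " +ᵂ " => W.add
local infixl:70 " ∘ᵂ " => W.mul
local prefix:max "-ᵂ" => W.neg
local postfix:max "⁻ᵂ" => W.inv

abbrev mulInverseSemigroup : InverseSemigroup S where
  mul := W.mul
  mul_assoc := W.mul_assoc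
  inv := W.inv
  mul_inv_mul_self := W.mul_inv_mul
  inv_mul_inv_self := W.inv_mul_inv
  eq_inv_of_mul_mul := W.inv_unique

theorem inv_inv (a : S) : a⁻ᵂ⁻ᵂ = a :=
  @InverseSemigroup.inv_inv S W.mulInverseSemigroup a

theorem inv_mul (a b : S) : (a ∘ᵂ b)⁻ᵂ = b⁻ᵂ ∘ᵂ a⁻ᵂ :=
  @InverseSemigroup.mul_inv_rev S W.mulInverseSemigroup a b

theorem mul_inv_mul_mul_inv (a : S) : (a ∘ᵂ a⁻ᵂ) ∘ᵂ (a ∘ᵂ a⁻ᵂ) = a ∘ᵂ a⁻ᵂ :=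
  @InverseSemigroup.isIdempotentElem_mul_inv S W.mulInverseSemigroup a

theorem inv_mul_self (a : S) : a⁻ᵂ ∘ᵂ a = -ᵂa⁻ᵂ +ᵂ a⁻ᵂ := by
  simpa only [W.inv_inv] using W.mul_inv_eq a⁻ᵂ

theorem neg_eq_self_of_add_self {e : S} (he : e +ᵂ e = e) : -ᵂe = e :=
  (W.neg_unique e e (by rw [he, he]) (by rw [he, he])).symm

/-- Both inverse-semigroup identities come from expanding
`a ∘ (b - b + b) = a ∘ b` and `a ∘ (-b + b - b) = a ∘ (-b)` by distributivity. -/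
theorem neg_add_mul_neg_add_neg (a b : S) : -ᵂa +ᵂ a ∘ᵂ (-ᵂb) +ᵂ -ᵂa = -ᵂ(a ∘ᵂ b) := by
  have hb := congrArg (W.mul a) (W.add_neg_add b)
  have hnb := congrArg (fun t => -ᵂa +ᵂ (t +ᵂ -ᵂa)) (congrArg (W.mul a) (W.neg_add_neg b))
  simp only [W.distrib] at hb hnb
  exact W.neg_unique _ _ (by simpa only [W.add_assoc] using hb)
    (by simpa only [W.add_assoc] using hnb)

theorem neg_add_neg_add_self (a : S) : -ᵂa +ᵂ (-ᵂa +ᵂ a) = -ᵂa := by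
  set e := -ᵂa +ᵂ a with he
  have he_add : e +ᵂ e = e := by rw [he, W.add_assoc, ← W.add_assoc a, W.add_neg_add]
  have he_neg : -ᵂe = e := W.neg_eq_self_of_add_self he_add
  have he_mul : e = a ∘ᵂ a⁻ᵂ := (W.mul_inv_eq a).symm
  have hw : e +ᵂ e ∘ᵂ (-ᵂa) = e ∘ᵂ (-ᵂa) := calc
    e +ᵂ e ∘ᵂ (-ᵂa) = e ∘ᵂ e +ᵂ -ᵂe +ᵂ e ∘ᵂ (-ᵂa) := by
        rw [he_neg, he_mul, W.mul_inv_mul_mul_inv, ← he_mul, he_add]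
    _ = e ∘ᵂ (e +ᵂ -ᵂa) := (W.distrib _ _ _).symm
    _ = e ∘ᵂ (-ᵂa) := by rw [he, W.neg_add_neg]
  have hwe : e ∘ᵂ (-ᵂa) +ᵂ e = -ᵂa := calc
    e ∘ᵂ (-ᵂa) +ᵂ e = -ᵂe +ᵂ e ∘ᵂ (-ᵂa) +ᵂ -ᵂe := by rw [he_neg, hw]
    _ = -ᵂ(e ∘ᵂ a) := W.neg_add_mul_neg_add_neg e a
    _ = -ᵂa := by rw [he_mul, W.mul_inv_mul]
  rw [← hwe, W.add_assoc, he_add]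

end WeakBrace

theorem weakBrace_rho_inv_formula {S : Type*} (W : WeakBrace S) :
    ∀ a b : S, W.inv (W.mul (W.inv (W.add (W.inv a) b)) b)
      = W.add (W.mul (W.inv b) (W.inv a)) (W.neg (W.inv b)) := by
  intro a b
  rw [W.inv_mul, W.inv_inv, W.distrib, W.inv_mul_self, W.add_assoc, W.neg_add_neg_add_self]
end
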